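/- arXiv:quant-ph/0509153 — 4 statements merged into one kernel-verified Lean document; each statement's English description precedes it below -/
import Mathlib

section
/- Let G be a nonnegative symmetric matrix, and M, N nonnegative matrices such that G is the entrywise (Hadamard) product of M and N, i.e., G[x,y] = M[x,y]·N[x,y] for all x,y. Then the spectral norm of G satisfies λ(G) ≤ max over pairs (x,y) with G[x,y] > 0 of r_x(M)·c_y(N), where r_x(M) is the ℓ₂-norm of the x-th row of M and c_y(N) is the ℓ₂-norm of the y-th column of N. -/
/-- Spectral norm (largest singular value) of a real matrix. -/
noncomputable def specNorm {n : Type*} [Fintype n] [DecidableEq n] (M : Matrix n n ℝ) : ℝ :=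
  ‖Matrix.toEuclideanCLM (𝕜 := ℝ) M‖

/-!
Write `⟪b, (M ⊙ N) a⟫ = ∑ₓ,ᵧ (M x y b x) (N x y a y)` and bound each term with nonzero
`M x y N x y` by the weighted AM-GM inequality
`2 p q ≤ r c (p² / r² + q² / c²) ≤ K (p² / r² + q² / c²)`, where `r = r_x(M)`, `c = c_y(N)`
and `K` is the maximum of `r_x(M) c_y(N)` over the support. Summing, the row and column
normalisations make the right-hand side at most `K (‖b‖² + ‖a‖²)`, and a bilinear bound of
this shape bounds the operator norm by `K`.
-/

open scoped Matrix RealInnerProductSpace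

theorem two_mul_mul_le_of_mul_le {p q r c K : ℝ} (hr : 0 < r) (hc : 0 < c) (h : r * c ≤ K) :
    2 * (p * q) ≤ K * (p ^ 2 / r ^ 2 + q ^ 2 / c ^ 2) := by
  have amgm : 2 * (p * q) ≤ r * c * (p ^ 2 / r ^ 2 + q ^ 2 / c ^ 2) := by
    have hsq : r * c * (p ^ 2 / r ^ 2 + q ^ 2 / c ^ 2) - 2 * (p * q)
        = (c * p - r * q) ^ 2 / (r * c) := by
      field_simp
      ring
    have : 0 ≤ (c * p - r * q) ^ 2 / (r * c) := by positivity
    linarith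
  exact amgm.trans (mul_le_mul_of_nonneg_right h (by positivity))

theorem sum_sum_sq_mul_div_sq_sqrt_le {ι κ : Type*} [Fintype ι] [Fintype κ] (A : ι → κ → ℝ)
    (v : ι → ℝ) : ∑ i, ∑ j, (A i j * v i) ^ 2 / √(∑ k, A i k ^ 2) ^ 2 ≤ ∑ i, v i ^ 2 := by
  refine Finset.sum_le_sum fun i _ => ?_
  have hrow : ∑ j, A i j ^ 2 / √(∑ k, A i k ^ 2) ^ 2 ≤ 1 := by
    rw [← Finset.sum_div, Real.sq_sqrt (by positivity)]
    exact div_self_le_one _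
  calc ∑ j, (A i j * v i) ^ 2 / √(∑ k, A i k ^ 2) ^ 2
      = v i ^ 2 * ∑ j, A i j ^ 2 / √(∑ k, A i k ^ 2) ^ 2 := by
        rw [Finset.mul_sum]
        exact Finset.sum_congr rfl fun j _ => by ring
    _ ≤ v i ^ 2 := mul_le_of_le_one_right (sq_nonneg _) hrow

theorem sqrt_sum_sq_pos {ι : Type*} [Fintype ι] {f : ι → ℝ} {i : ι} (hi : f i ≠ 0) :
    0 < √(∑ j, f j ^ 2) :=
  Real.sqrt_pos.2 <|
    Finset.sum_pos' (fun j _ => sq_nonneg (f j)) ⟨i, Finset.mem_univ i, by positivity⟩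

theorem ContinuousLinearMap.opNorm_le_of_two_mul_inner_le {E F : Type*}
    [NormedAddCommGroup E] [NormedSpace ℝ E] [NormedAddCommGroup F] [InnerProductSpace ℝ F]
    (T : E →L[ℝ] F) {K : ℝ} (hK : 0 ≤ K)
    (h : ∀ a b, 2 * ⟪b, T a⟫ ≤ K * (‖a‖ ^ 2 + ‖b‖ ^ 2)) : ‖T‖ ≤ K := by
  refine T.opNorm_le_bound hK fun a => ?_
  rcases (norm_nonneg (T a)).eq_or_lt with hTa | hTa
  · rw [← hTa]
    positivity
  have ha : 0 < ‖a‖ := norm_pos_iff.2 fun ha => by simp [ha] at hTa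
  -- After rescaling, both terms on the right are equal, so AM-GM becomes the product bound.
  have hbal := h (‖T a‖ • a) (‖a‖ • T a)
  simp only [map_smul, inner_smul_left, inner_smul_right, real_inner_self_eq_norm_sq, norm_smul,
    norm_norm, conj_trivial] at hbal
  refine le_of_mul_le_mul_left ?_ (by positivity : 0 < ‖a‖ * ‖T a‖ ^ 2)
  nlinarith

theorem specNorm_hadamard_le {n : Type*} [Fintype n] [DecidableEq n] (M N : Matrix n n ℝ)
    {K : ℝ} (hK : 0 ≤ K)
    (h : ∀ x y, M x y * N x y ≠ 0 → √(∑ z, M x z ^ 2) * √(∑ z, N z y ^ 2) ≤ K) :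
    specNorm (M ⊙ N) ≤ K := by
  set r : n → ℝ := fun x => √(∑ z, M x z ^ 2)
  set c : n → ℝ := fun y => √(∑ z, N z y ^ 2)
  have term : ∀ (a b : EuclideanSpace ℝ n) x y, 2 * (b x * ((M ⊙ N) x y * a y)) ≤
      K * ((M x y * b x) ^ 2 / r x ^ 2 + (N x y * a y) ^ 2 / c y ^ 2) := by
    intro a b x y
    by_cases hxy : M x y * N x y = 0
    · simp only [Matrix.hadamard_apply, hxy, zero_mul, mul_zero]
      positivity
    have hr : 0 < r x := sqrt_sum_sq_pos (left_ne_zero_of_mul hxy)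
    have hc : 0 < c y := sqrt_sum_sq_pos (f := (N · y)) (right_ne_zero_of_mul hxy)
    convert two_mul_mul_le_of_mul_le (p := M x y * b x) (q := N x y * a y) hr hc (h x y hxy)
      using 2
    simp only [Matrix.hadamard_apply]
    ring
  rw [specNorm]
  refine ContinuousLinearMap.opNorm_le_of_two_mul_inner_le _ hK fun a b => ?_
  rw [Matrix.inner_toEuclideanCLM]
  have hrows := sum_sum_sq_mul_div_sq_sqrt_le M b
  have hcols := sum_sum_sq_mul_div_sq_sqrt_le Nᵀ a
  rw [Finset.sum_comm] at hcols
  calc 2 * (b ⬝ᵥ (M ⊙ N) *ᵥ a) = ∑ x, ∑ y, 2 * (b x * ((M ⊙ N) x y * a y)) := by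
        simp only [dotProduct, Matrix.mulVec, Finset.mul_sum]
    _ ≤ ∑ x, ∑ y, K * ((M x y * b x) ^ 2 / r x ^ 2 + (N x y * a y) ^ 2 / c y ^ 2) :=
        Finset.sum_le_sum fun x _ => Finset.sum_le_sum fun y _ => term a b x y
    _ = K * (∑ x, ∑ y, (M x y * b x) ^ 2 / r x ^ 2 +
          ∑ x, ∑ y, (N x y * a y) ^ 2 / c y ^ 2) := by
        simp only [← Finset.mul_sum, ← Finset.sum_add_distrib]
    _ ≤ K * (‖a‖ ^ 2 + ‖b‖ ^ 2) := by
        rw [EuclideanSpace.real_norm_sq_eq, EuclideanSpace.real_norm_sq_eq,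
          add_comm (∑ i, a i ^ 2)]
        exact mul_le_mul_of_nonneg_left (add_le_add hrows hcols) hK

theorem stmt_5_general {n : Type*} [Fintype n] [DecidableEq n]
    (G M N : Matrix n n ℝ)
    (hG : ∀ x y, 0 ≤ G x y)
    (hprod : ∀ x y, G x y = M x y * N x y) :
    specNorm G ≤ ⨆ p : {p : n × n // 0 < G p.1 p.2},
      Real.sqrt (∑ z, M p.1.1 z ^ 2) * Real.sqrt (∑ z, N z p.1.2 ^ 2) := by
  obtain rfl : G = M ⊙ N := Matrix.ext hprod
  refine specNorm_hadamard_le M N (Real.iSup_nonneg fun _ => by positivity) fun x y hxy => ?_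
  exact le_ciSup_of_le (Finite.bddAbove_range _) ⟨(x, y), (hG x y).lt_of_ne' hxy⟩ le_rfl

/-- Mathias' lemma: if `G = M ∘ N` entrywise, then
`λ(G) ≤ max_{x,y : G[x,y] > 0} r_x(M) c_y(N)`. -/
theorem stmt_5 {n : Type*} [Fintype n] [DecidableEq n]
    (G M N : Matrix n n ℝ)
    (hG : ∀ x y, 0 ≤ G x y) (hsym : G.IsSymm)
    (hM : ∀ x y, 0 ≤ M x y) (hN : ∀ x y, 0 ≤ N x y)
    (hprod : ∀ x y, G x y = M x y * N x y) :
    specNorm G ≤ ⨆ p : {p : n × n // 0 < G p.1 p.2},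
      Real.sqrt (∑ z, M p.1.1 z ^ 2) * Real.sqrt (∑ z, N z p.1.2 ^ 2) :=
  stmt_5_general G M N hG hprod
end

section
/- Any finite principal submatrix of the Hilbert matrix H[r,s] = 1/(r+s-1) (r,s ≥ 1) has spectral norm at most π. -/
/-!
Schur test with the weights `p s = (s + 1/2)^(-1/2)`: since `1/(r+s+1) = 1/((r+1/2)+(s+1/2))`,
the row sums `∑ₛ H r s p s` are midpoint-rule sums of `x ↦ 1/((x + r + 1/2)√x)` over the nodes
`s + 1/2`. This function is convex, so each node underestimates the integral over its unit cell,
and `∫₀^∞ dx/((x+a)√x) = π/√a`. Hence `H p ≤ π p` entrywise, and `‖H‖ ≤ π` by the Schur test.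
-/

open Real Set Finset

theorem Matrix.norm_toEuclideanCLM_le_of_schur_test {ι : Type*} [Fintype ι] [DecidableEq ι]
    (A : Matrix ι ι ℝ) (p : ι → ℝ) {c : ℝ} (hc : 0 ≤ c) (hA : ∀ i j, 0 ≤ A i j)
    (hp : ∀ i, 0 < p i) (hrow : ∀ i, ∑ j, A i j * p j ≤ c * p i)
    (hcol : ∀ j, ∑ i, A i j * p i ≤ c * p j) :
    ‖Matrix.toEuclideanCLM (𝕜 := ℝ) A‖ ≤ c := by
  refine ContinuousLinearMap.opNorm_le_bound _ hc fun x => ?_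
  refine le_of_pow_le_pow_left₀ two_ne_zero (by positivity) ?_
  have hrow_sq (i : ι) : (∑ j, A i j * x j) ^ 2 ≤ c * p i * ∑ j, A i j * x j ^ 2 / p j := by
    -- Cauchy–Schwarz after splitting `A i j * x j` as `√(A i j * p j) * √(A i j * x j ^ 2 / p j)`
    have hcs := sum_sq_le_sum_mul_sum_of_sq_le_mul univ (r := fun j => A i j * x j)
      (f := fun j => A i j * p j) (g := fun j => A i j * x j ^ 2 / p j)
      (fun j _ => mul_nonneg (hA i j) (hp j).le)
      (fun j _ => div_nonneg (mul_nonneg (hA i j) (sq_nonneg _)) (hp j).le)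
      (fun j _ => le_of_eq (by field_simp [(hp j).ne']))
    exact hcs.trans (mul_le_mul_of_nonneg_right (hrow i)
      (sum_nonneg fun j _ => div_nonneg (mul_nonneg (hA i j) (sq_nonneg _)) (hp j).le))
  calc ‖Matrix.toEuclideanCLM (𝕜 := ℝ) A x‖ ^ 2 = ∑ i, (∑ j, A i j * x j) ^ 2 := by
        simp [EuclideanSpace.norm_sq_eq, Matrix.mulVec, dotProduct]
    _ ≤ ∑ i, c * p i * ∑ j, A i j * x j ^ 2 / p j := sum_le_sum fun i _ => hrow_sq i
    _ = c * ∑ j, x j ^ 2 / p j * ∑ i, A i j * p i := by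
        simp_rw [mul_sum]
        rw [sum_comm]
        refine sum_congr rfl fun j _ => sum_congr rfl fun i _ => by ring
    _ ≤ c * ∑ j, x j ^ 2 / p j * (c * p j) := by
        gcongr with j
        · exact div_nonneg (sq_nonneg _) (hp j).le
        · exact hcol j
    _ = (c * ‖x‖) ^ 2 := by
        rw [mul_pow, EuclideanSpace.norm_sq_eq, mul_sum, sq, mul_sum]
        refine sum_congr rfl fun j _ => ?_
        field_simp [(hp j).ne']
        simp

theorem mul_le_sub_of_hasDerivAt_of_midpoint_le {F f : ℝ → ℝ} {m h : ℝ} (hh : 0 ≤ h)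
    (hF : ContinuousOn F (Icc (m - h) (m + h)))
    (hderiv : ∀ x ∈ Ioo (m - h) (m + h), HasDerivAt F (f x) x)
    (hmid : ∀ t ∈ Ioo 0 h, 2 * f m ≤ f (m + t) + f (m - t)) :
    2 * h * f m ≤ F (m + h) - F (m - h) := by
  set G : ℝ → ℝ := fun t => F (m + t) - F (m - t) - 2 * t * f m
  have hmaps (t : ℝ) (ht : t ∈ Icc 0 h) :
      m + t ∈ Icc (m - h) (m + h) ∧ m - t ∈ Icc (m - h) (m + h) :=
    ⟨⟨by linarith [ht.1], by linarith [ht.2]⟩, ⟨by linarith [ht.2], by linarith [ht.1]⟩⟩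
  have hG : MonotoneOn G (Icc 0 h) := by
    refine monotoneOn_of_hasDerivWithinAt_nonneg (convex_Icc 0 h)
      (f' := fun t => f (m + t) + f (m - t) - 2 * f m) ?_ ?_ ?_
    · refine ContinuousOn.sub (ContinuousOn.sub ?_ ?_) (by fun_prop)
      · exact hF.comp (by fun_prop) fun t ht => (hmaps t ht).1
      · exact hF.comp (by fun_prop) fun t ht => (hmaps t ht).2
    · intro t ht
      rw [interior_Icc] at ht
      obtain ⟨ht0, hth⟩ := ht
      have h1 := (hderiv (m + t) ⟨by linarith, by linarith⟩).comp_const_add m t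
      have h2 := (hderiv (m - t) ⟨by linarith, by linarith⟩).comp_const_sub m t
      refine HasDerivAt.hasDerivWithinAt ?_
      convert (h1.sub h2).sub ((hasDerivAt_id t).mul_const (2 * f m)) using 1
      · funext s; simp only [G, id, Pi.sub_apply]; ring
      · ring
    · intro t ht
      rw [interior_Icc] at ht
      linarith [hmid t ht]
  have := hG ⟨le_rfl, hh⟩ ⟨hh, le_rfl⟩ hh
  simp only [G, add_zero, sub_zero, mul_zero, zero_mul, sub_self] at this
  linarith

noncomputable def hilbertDensity (a x : ℝ) : ℝ := (x + a)⁻¹ * (√x)⁻¹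

lemma two_mul_hilbertDensity_le {a m t : ℝ} (ha : 0 < a) (h₁ : 0 < m + t) (h₂ : 0 < m - t) :
    2 * hilbertDensity a m ≤ hilbertDensity a (m + t) + hilbertDensity a (m - t) := by
  have hm : 0 < m := by linarith
  have hgm : √(m + t) * √(m - t) ≤ m := by
    nlinarith [sq_nonneg (√(m + t) - √(m - t)), sq_sqrt h₁.le, sq_sqrt h₂.le]
  -- the density is midpoint log-convex, which is stronger than midpoint convex
  have hlog : hilbertDensity a m ^ 2 ≤ hilbertDensity a (m + t) * hilbertDensity a (m - t) := by
    simp only [hilbertDensity, ← mul_inv, inv_pow]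
    refine inv_anti₀ (by positivity) ?_
    calc (m + t + a) * √(m + t) * ((m - t + a) * √(m - t))
        = ((m + a) ^ 2 - t ^ 2) * (√(m + t) * √(m - t)) := by ring
      _ ≤ (m + a) ^ 2 * m := by gcongr; nlinarith [sq_nonneg t]
      _ = ((m + a) * √m) ^ 2 := by rw [mul_pow, sq_sqrt hm.le]
  have hpos (x : ℝ) (hx : 0 < x) : 0 < hilbertDensity a x := by
    unfold hilbertDensity; positivity
  nlinarith [hpos m hm, hpos _ h₁, hpos _ h₂,
    sq_nonneg (hilbertDensity a (m + t) - hilbertDensity a (m - t))]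

lemma hasDerivAt_mul_arctan_sqrt_div_sqrt {a x : ℝ} (ha : 0 < a) (hx : 0 < x) :
    HasDerivAt (fun y => 2 / √a * arctan (√y / √a)) (hilbertDensity a x) x := by
  have hsa : 0 < √a := sqrt_pos.2 ha
  have hsx : 0 < √x := sqrt_pos.2 hx
  refine ((((hasDerivAt_sqrt hx.ne').div_const √a).arctan).const_mul (2 / √a)).congr_deriv ?_
  simp only [hilbertDensity]
  field_simp
  linear_combination -(sq_sqrt ha.le + sq_sqrt hx.le)

lemma sum_range_hilbertDensity_le {a : ℝ} (ha : 0 < a) (n : ℕ) :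
    ∑ s ∈ range n, hilbertDensity a (s + 1 / 2) ≤ π / √a := by
  set F : ℝ → ℝ := fun y => 2 / √a * arctan (√y / √a)
  have hstep (s : ℕ) : hilbertDensity a (s + 1 / 2) ≤ F (s + 1) - F s := by
    have hs : (0 : ℝ) ≤ s := s.cast_nonneg
    have := mul_le_sub_of_hasDerivAt_of_midpoint_le (F := F) (m := s + 1 / 2) (h := 1 / 2)
      (by norm_num) (by fun_prop)
      (fun x hx => hasDerivAt_mul_arctan_sqrt_div_sqrt ha (by linarith [hx.1]))
      (fun t ht => two_mul_hilbertDensity_le ha (by linarith [ht.1]) (by linarith [ht.2]))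
    convert this using 2 <;> ring_nf
  calc ∑ s ∈ range n, hilbertDensity a (s + 1 / 2)
      ≤ ∑ s ∈ range n, (F (s + 1) - F s) := sum_le_sum fun s _ => hstep s
    _ = F n := by simpa [F] using sum_range_sub (fun s : ℕ => F s) n
    _ ≤ 2 / √a * (π / 2) := by simp only [F]; gcongr; exact (arctan_lt_pi_div_two _).le
    _ = π / √a := by ring

/-- Any finite principal section of the Hilbert matrix `[1/(r+s-1)]_{r,s ≥ 1}`
has spectral norm at most `π`.  (Here rows and columns are indexed from 0,
so the entry is `1/(r+s+1)`.) -/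
theorem stmt_8 (n : ℕ) (H : Matrix (Fin n) (Fin n) ℝ)
    (hH : ∀ r s, H r s = 1 / ((r : ℝ) + (s : ℝ) + 1)) :
    specNorm H ≤ Real.pi := by
  let p : Fin n → ℝ := fun s => (√((s : ℝ) + 1 / 2))⁻¹
  have hrow (r : Fin n) : ∑ s, H r s * p s ≤ π * p r := by
    have hr : (0 : ℝ) < r + 1 / 2 := by positivity
    calc ∑ s, H r s * p s = ∑ s ∈ range n, hilbertDensity (r + 1 / 2) (s + 1 / 2) := by
          rw [← Fin.sum_univ_eq_sum_range]
          refine sum_congr rfl fun s _ => ?_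
          simp only [p, hH, hilbertDensity]
          ring_nf
      _ ≤ π / √(r + 1 / 2) := sum_range_hilbertDensity_le hr n
      _ = π * p r := rfl
  have hcol (s : Fin n) : ∑ r, H r s * p r ≤ π * p s := by
    simpa only [hH, add_comm] using hrow s
  exact Matrix.norm_toEuclideanCLM_le_of_schur_test H p pi_pos.le
    (fun r s => by rw [hH]; positivity) (fun s => by positivity) hrow hcol
end

section
/- Let F: {0,1}^N → {0,1} be a total boolean function with block sensitivity bs(F) = k, witnessed at input x' by disjoint sensitive blocks B_1,...,B_k. Define the symmetric 0/1 matrix Γ by Γ[x', x'^{B_j}] = Γ[x'^{B_j}, x'] = 1 for j = 1,...,k, and 0 elsewhere. Then λ(Γ) = √k and max_i λ(Γ_i) = 1, where Γ_i zeroes out entries with x_i = y_i. -/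
/-!
`Γ` is the adjacency matrix of a star with centre `x'` and leaves `x'^{B_j}`. For a star with
`m` leaves, `‖Γ f‖² = (∑_{leaves} f)² + m f(centre)²`, which Cauchy–Schwarz bounds by `m ‖f‖²`,
with equality at the indicator of the centre; hence `λ = √m`. Each `Γ_i` is again a star with
centre `x'`, whose leaves are the flips `x'^{B_j}` with `i ∈ B_j`: by disjointness there is at
most one, and there is one when `i` lies in some block.
-/

open Matrix Finset Function

section Star

variable {α : Type*} [DecidableEq α]

def starMatrix (c : α) (S : Finset α) : Matrix α α ℝ :=
  of fun u v => if (u = c ∧ v ∈ S) ∨ (v = c ∧ u ∈ S) then 1 else 0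

variable [Fintype α] {c : α} {S : Finset α}

lemma starMatrix_mulVec (hc : c ∉ S) (f : α → ℝ) (u : α) :
    (starMatrix c S *ᵥ f) u = (if u = c then ∑ v ∈ S, f v else 0) + if u ∈ S then f c else 0 := by
  by_cases hu : u = c
  · subst hu
    simp [starMatrix, mulVec, dotProduct, hc]
  · by_cases huS : u ∈ S <;> simp [starMatrix, mulVec, dotProduct, hu, huS]

lemma norm_toEuclideanCLM_starMatrix_sq (hc : c ∉ S) (f : EuclideanSpace ℝ α) :
    ‖toEuclideanCLM (𝕜 := ℝ) (starMatrix c S) f‖ ^ 2 = (∑ v ∈ S, f v) ^ 2 + #S * f c ^ 2 := by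
  rw [EuclideanSpace.real_norm_sq_eq]
  simp only [ofLp_toEuclideanCLM, starMatrix_mulVec hc]
  have hsq : ∀ u, ((if u = c then ∑ v ∈ S, f v else 0) + if u ∈ S then f c else 0) ^ 2 =
      (if u = c then (∑ v ∈ S, f v) ^ 2 else 0) + if u ∈ S then f c ^ 2 else 0 := by
    intro u
    by_cases hu : u = c
    · subst hu; simp [hc]
    · simp [hu]
  simp [hsq, sum_add_distrib]

lemma specNorm_starMatrix (hc : c ∉ S) : specNorm (starMatrix c S) = √(#S : ℝ) := by
  apply le_antisymm
  · refine ContinuousLinearMap.opNorm_le_bound _ (Real.sqrt_nonneg _) fun f => ?_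
    refine (sq_le_sq₀ (norm_nonneg _) (by positivity)).1 ?_
    have hCS : (∑ v ∈ S, f v) ^ 2 ≤ #S * ∑ v ∈ S, f v ^ 2 := sq_sum_le_card_mul_sum_sq
    have hsub : ∑ v ∈ S, f v ^ 2 + f c ^ 2 ≤ ‖f‖ ^ 2 := by
      rw [EuclideanSpace.real_norm_sq_eq, add_comm, ← sum_insert (f := fun v => f v ^ 2) hc]
      exact sum_le_sum_of_subset_of_nonneg (subset_univ _) fun _ _ _ => sq_nonneg _
    rw [norm_toEuclideanCLM_starMatrix_sq hc, mul_pow, Real.sq_sqrt (Nat.cast_nonneg _)]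
    nlinarith
  · set e : EuclideanSpace ℝ α := EuclideanSpace.single c 1
    have he : ‖toEuclideanCLM (𝕜 := ℝ) (starMatrix c S) e‖ ^ 2 = #S := by
      rw [norm_toEuclideanCLM_starMatrix_sq hc]
      simp [e, hc]
    calc √(#S : ℝ) = ‖toEuclideanCLM (𝕜 := ℝ) (starMatrix c S) e‖ := by
          rw [← he, Real.sqrt_sq (norm_nonneg _)]
      _ ≤ specNorm (starMatrix c S) := by
          simpa [e, specNorm] using (toEuclideanCLM (𝕜 := ℝ) (starMatrix c S)).le_opNorm e

end Star

lemma starMatrix_filter_apply {ι β : Type*} [DecidableEq (ι → β)] [DecidableEq β]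
    (c : ι → β) (S : Finset (ι → β)) (i : ι) (u v : ι → β) :
    starMatrix c {w ∈ S | w i ≠ c i} u v = if u i ≠ v i then starMatrix c S u v else 0 := by
  simp only [starMatrix, of_apply, mem_filter]
  grind

section BlockFlips

variable {ι κ : Type*} [DecidableEq ι] {x : ι → Bool} {B : κ → Finset ι} {flip : κ → ι → Bool}

lemma flip_apply_ne_iff (hflip : ∀ j i, flip j i = if i ∈ B j then !(x i) else x i)
    (j : κ) (i : ι) :
    flip j i ≠ x i ↔ i ∈ B j := by
  rw [hflip]; split_ifs <;> simp [*]

lemma flip_ne (hflip : ∀ j i, flip j i = if i ∈ B j then !(x i) else x i) {j : κ}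
    (hne : (B j).Nonempty) : flip j ≠ x := fun h =>
  let ⟨i, hi⟩ := hne
  (flip_apply_ne_iff hflip j i).2 hi (congrFun h i)

lemma flip_injective (hflip : ∀ j i, flip j i = if i ∈ B j then !(x i) else x i)
    (hdisj : Pairwise (Disjoint on B)) (hne : ∀ j, (B j).Nonempty) : Injective flip := by
  intro j j' h
  by_contra hjj
  obtain ⟨i, hi⟩ := hne j
  have hi' : i ∈ B j' := (flip_apply_ne_iff hflip j' i).1 (h ▸ (flip_apply_ne_iff hflip j i).2 hi)
  exact disjoint_left.1 (hdisj hjj) hi hi'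

lemma card_filter_image_flip_le_one [Fintype κ] [DecidableEq (ι → Bool)]
    (hflip : ∀ j i, flip j i = if i ∈ B j then !(x i) else x i)
    (hdisj : Pairwise (Disjoint on B)) (i : ι) :
    #{w ∈ univ.image flip | w i ≠ x i} ≤ 1 := by
  refine card_le_one.2 fun w hw w' hw' => ?_
  simp only [mem_filter, mem_image, mem_univ, true_and] at hw hw'
  obtain ⟨⟨j, rfl⟩, hj⟩ := hw
  obtain ⟨⟨j', rfl⟩, hj'⟩ := hw'
  rw [flip_apply_ne_iff hflip] at hj hj'
  by_contra hjj
  exact disjoint_left.1 (hdisj (ne_of_apply_ne flip hjj)) hj hj'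

end BlockFlips

theorem stmt_11_general (N k : ℕ) (hk : 0 < k)
    (x' : Fin N → Bool)
    (B : Fin k → Finset (Fin N))
    (hdisj : ∀ j j', j ≠ j' → Disjoint (B j) (B j'))
    (hne : ∀ j, (B j).Nonempty)
    (flip : Fin k → (Fin N → Bool))
    (hflip : ∀ j i, flip j i = if i ∈ B j then !(x' i) else x' i)
    (Γ : Matrix (Fin N → Bool) (Fin N → Bool) ℝ)
    (hΓ : ∀ u v, Γ u v =
      if (u = x' ∧ ∃ j, v = flip j) ∨ (v = x' ∧ ∃ j, u = flip j) then 1 else 0)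
    (Γi : Fin N → Matrix (Fin N → Bool) (Fin N → Bool) ℝ)
    (hΓi : ∀ i u v, Γi i u v = if u i ≠ v i then Γ u v else 0) :
    specNorm Γ = Real.sqrt k ∧ (⨆ i : Fin N, specNorm (Γi i)) = 1 := by
  set S := univ.image flip
  have hx' : x' ∉ S := by
    simpa [S] using fun j => flip_ne hflip (hne j)
  have hΓ_star : Γ = starMatrix x' S := by
    ext u v; simp [hΓ, starMatrix, S, eq_comm]
  have hΓi_star : ∀ i, Γi i = starMatrix x' {w ∈ S | w i ≠ x' i} := by
    intro i; ext u v; rw [hΓi, starMatrix_filter_apply, hΓ_star]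
  have hnorm_i : ∀ i, specNorm (Γi i) = √(#{w ∈ S | w i ≠ x' i} : ℝ) := fun i => by
    rw [hΓi_star, specNorm_starMatrix (fun h => hx' (mem_filter.1 h).1)]
  obtain ⟨i₀, hi₀⟩ := hne ⟨0, hk⟩
  have : Nonempty (Fin N) := ⟨i₀⟩
  refine ⟨?_, le_antisymm (ciSup_le fun i => ?_) (le_ciSup_of_le (Finite.bddAbove_range _) i₀ ?_)⟩
  · rw [hΓ_star, specNorm_starMatrix hx',
      card_image_of_injective _ (flip_injective hflip hdisj hne), card_univ, Fintype.card_fin]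
  · rw [hnorm_i, Real.sqrt_le_one]
    exact_mod_cast card_filter_image_flip_le_one hflip hdisj i
  · rw [hnorm_i, Real.one_le_sqrt]
    exact_mod_cast card_pos.2 ⟨flip ⟨0, hk⟩, by simp [S, flip_apply_ne_iff hflip, hi₀]⟩

/-- The block-sensitivity adversary matrix (a star with `k` leaves, the leaves being
the sensitive-block flips of `x'`) has `λ(Γ) = √k` and `max_i λ(Γ_i) = 1`. -/
theorem stmt_11 (N k : ℕ) (hk : 0 < k)
    (F : (Fin N → Bool) → Bool) (x' : Fin N → Bool)
    (B : Fin k → Finset (Fin N))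
    (hdisj : ∀ j j', j ≠ j' → Disjoint (B j) (B j'))
    (hne : ∀ j, (B j).Nonempty)
    (flip : Fin k → (Fin N → Bool))
    (hflip : ∀ j i, flip j i = if i ∈ B j then !(x' i) else x' i)
    (hsens : ∀ j, F (flip j) ≠ F x')
    (Γ : Matrix (Fin N → Bool) (Fin N → Bool) ℝ)
    (hΓ : ∀ u v, Γ u v =
      if (u = x' ∧ ∃ j, v = flip j) ∨ (v = x' ∧ ∃ j, u = flip j) then 1 else 0)
    (Γi : Fin N → Matrix (Fin N → Bool) (Fin N → Bool) ℝ)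
    (hΓi : ∀ i u v, Γi i u v = if u i ≠ v i then Γ u v else 0) :
    specNorm Γ = Real.sqrt k ∧ (⨆ i : Fin N, specNorm (Γi i)) = 1 :=
  stmt_11_general N k hk x' B hdisj hne flip hflip Γ hΓ Γi hΓi
end

section
/- Any multilinear real polynomial p in N variables that approximates the parity function with positive bias ε > 0 (i.e., p(x) ≥ 1/2 + ε when x has odd Hamming weight and p(x) ≤ 1/2 - ε when x has even Hamming weight, for all x ∈ {0,1}^N) has degree exactly N. -/
/-!
Correlate `p` with the parity character `x ↦ (-1) ^ |x|` on the cube `{0,1}^N`.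
The correlation factors over monomials, and a monomial not involving the variable `j`
contributes the factor `∑_b (-1)^b = 0`; so if `deg p < N`, every monomial misses a variable
and the correlation vanishes. The bias, on the other hand, makes every term of the
correlation of `p - 1/2` at most `-ε`, while the constant `1/2` has correlation zero.
Multilinearity gives `deg p ≤ N`.
-/

open MvPolynomial Finset

namespace MvPolynomial

variable {σ R : Type*} [Fintype σ]

theorem totalDegree_le_card_of_degreeOf_le_one [CommSemiring R] {p : MvPolynomial σ R}
    (hp : ∀ i, p.degreeOf i ≤ 1) : p.totalDegree ≤ Fintype.card σ := by
  classical
  have hnodup : p.degrees.Nodup :=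
    Multiset.nodup_iff_count_le_one.mpr fun i => degreeOf_def i p ▸ hp i
  calc p.totalDegree ≤ Multiset.card p.degrees := totalDegree_le_degrees_card p
    _ = #p.degrees.toFinset := (Multiset.toFinset_card_of_nodup hnodup).symm
    _ ≤ Fintype.card σ := card_le_univ _

theorem exists_eq_zero_of_totalDegree_lt_card [CommSemiring R] {p : MvPolynomial σ R}
    {d : σ →₀ ℕ} (hd : d ∈ p.support) (hp : p.totalDegree < Fintype.card σ) :
    ∃ j, d j = 0 := by
  by_contra! hpos
  have : Fintype.card σ ≤ d.sum fun _ e => e := by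
    calc Fintype.card σ = ∑ _i : σ, 1 := by simp
      _ ≤ ∑ i, d i := sum_le_sum fun i _ => Nat.one_le_iff_ne_zero.mpr (hpos i)
      _ = d.sum fun _ e => e := by rw [← Finsupp.degree_eq_sum]; rfl
  exact (le_totalDegree hd).not_gt (hp.trans_le this)

variable [CommRing R]

theorem neg_one_pow_card_filter_eq_prod (x : σ → Bool) :
    (-1 : R) ^ #{i | x i} = ∏ i, if x i then -1 else 1 := by
  rw [prod_ite, prod_const, prod_const, one_pow, mul_one]

variable [DecidableEq σ]

theorem sum_neg_one_pow_mul_eval_monomial_eq_zero {d : σ →₀ ℕ} {j : σ} (hj : d j = 0) (c : R) :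
    ∑ x : σ → Bool, (-1 : R) ^ #{i | x i} *
      eval (fun i => if x i then 1 else 0) (monomial d c) = 0 := by
  have hfactor : ∑ b : Bool, (if b then (-1 : R) else 1) * (if b then 1 else 0) ^ d j = 0 := by
    simp [hj]
  calc ∑ x : σ → Bool, (-1 : R) ^ #{i | x i} *
        eval (fun i => if x i then 1 else 0) (monomial d c)
      = c * ∑ x : σ → Bool, ∏ i, (if x i then (-1 : R) else 1) * (if x i then 1 else 0) ^ d i := by
        rw [mul_sum]
        refine sum_congr rfl fun x _ => ?_
        rw [eval_monomial, Finsupp.prod_fintype _ _ (fun _ => pow_zero _),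
          neg_one_pow_card_filter_eq_prod, prod_mul_distrib]
        ring
    _ = c * ∏ i, ∑ b : Bool, (if b then (-1 : R) else 1) * (if b then 1 else 0) ^ d i := by
        rw [Fintype.prod_sum]
    _ = 0 := by rw [prod_eq_zero (mem_univ j) hfactor, mul_zero]

theorem sum_neg_one_pow_mul_eval_eq_zero {p : MvPolynomial σ R}
    (hp : p.totalDegree < Fintype.card σ) :
    ∑ x : σ → Bool, (-1 : R) ^ #{i | x i} * eval (fun i => if x i then 1 else 0) p = 0 := by
  conv_lhs => rw [p.as_sum]
  simp only [map_sum, mul_sum]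
  rw [sum_comm]
  refine sum_eq_zero fun d hd => ?_
  obtain ⟨j, hj⟩ := exists_eq_zero_of_totalDegree_lt_card hd hp
  exact sum_neg_one_pow_mul_eval_monomial_eq_zero hj _

theorem sum_neg_one_pow_eq_zero [Nonempty σ] : ∑ x : σ → Bool, (-1 : R) ^ #{i | x i} = 0 := by
  obtain ⟨j⟩ := ‹Nonempty σ›
  simpa using sum_neg_one_pow_mul_eval_monomial_eq_zero (R := R) (d := 0) (j := j) rfl 1

end MvPolynomial

/-- Any multilinear real polynomial approximating parity with positive bias `ε`
has degree exactly `N`. -/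
theorem stmt_13 (N : ℕ) (ε : ℝ) (hε : 0 < ε)
    (p : MvPolynomial (Fin N) ℝ)
    (hml : ∀ i, p.degreeOf i ≤ 1)
    (hodd : ∀ x : Fin N → Bool, Odd (Finset.univ.filter (fun i => x i)).card →
      1 / 2 + ε ≤ MvPolynomial.eval (fun i => if x i then (1 : ℝ) else 0) p)
    (heven : ∀ x : Fin N → Bool, Even (Finset.univ.filter (fun i => x i)).card →
      MvPolynomial.eval (fun i => if x i then (1 : ℝ) else 0) p ≤ 1 / 2 - ε) :
    p.totalDegree = N := by
  have hle : p.totalDegree ≤ N := by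
    simpa using totalDegree_le_card_of_degreeOf_le_one hml
  refine hle.antisymm (not_lt.mp fun hlt => ?_)
  have hne : Nonempty (Fin N) := ⟨⟨0, by omega⟩⟩
  have hbias : ∀ x : Fin N → Bool, (-1 : ℝ) ^ #{i | x i} *
      (eval (fun i => if x i then (1 : ℝ) else 0) p - 1 / 2) ≤ -ε := by
    intro x
    rcases Nat.even_or_odd #{i | x i} with he | ho
    · rw [he.neg_one_pow, one_mul]
      linarith [heven x he]
    · rw [ho.neg_one_pow, neg_one_mul]
      linarith [hodd x ho]
  have hsum := sum_le_sum fun x (_ : x ∈ univ) => hbias x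
  have hcorr := sum_neg_one_pow_mul_eval_eq_zero (R := ℝ) (p := p) (by simpa using hlt)
  simp only [mul_sub, sum_sub_distrib, ← sum_mul, sum_neg_one_pow_eq_zero, hcorr, sum_const,
    card_univ, smul_neg, nsmul_eq_mul] at hsum
  have hpos : (0 : ℝ) < Fintype.card (Fin N → Bool) * ε := by positivity
  linarith
end
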